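/- A positive definite real binary quadratic form is multiminimizing (attains its minimum on some nontrivial coset of 2ℤ² more than twice up to sign) if and only if it is SL(2,ℤ)-equivalent to a diagonal form A x² + C y². -/

import Mathlib

/-!
If `F(p) = F(q)` for two points `q ≠ ±p` of a coset of `2ℤ²`, then `u = (p + q)/2` and
`v = (p - q)/2` are nonzero integer vectors orthogonal for the polar form of `F`, so
`F(s u + t v) = s² F(u) + t² F(v)`. If `u, v` do not span `ℤ²`, pick `w ∈ ℤ²` outside
`ℤu + ℤv`; translating `p = u + v` by `2w` and by even multiples of `u` and `v` reaches a point
`s u + t v` of the same coset with `|s|, |t| ≤ 1` and one inequality strict, which is shorter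
than `p`. Hence a minimal `p` forces `u, v` to be a basis of `ℤ²`, in which `F` is diagonal.
Conversely, in a diagonalizing basis the coset of `u + v` consists of the `s u + t v` with
`s, t` odd, so its minimum `A' + C'` is attained at `±(u + v)` and `±(u - v)`.
-/

def binQF (A B C : ℝ) (x y : ℤ) : ℝ :=
  A * (x : ℝ) ^ 2 + B * (x : ℝ) * (y : ℝ) + C * (y : ℝ) ^ 2

def IsMultiminimizing (A B C : ℝ) : Prop :=
  ∃ e : ℤ × ℤ, ¬(Even e.1 ∧ Even e.2) ∧
    ∃ p q : ℤ × ℤ,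
      Even (p.1 - e.1) ∧ Even (p.2 - e.2) ∧ Even (q.1 - e.1) ∧ Even (q.2 - e.2) ∧
      (∀ x y : ℤ, Even (x - e.1) → Even (y - e.2) →
        binQF A B C p.1 p.2 ≤ binQF A B C x y) ∧
      binQF A B C q.1 q.2 = binQF A B C p.1 p.2 ∧
      q ≠ p ∧ q ≠ (-p.1, -p.2)

def IsDiagonalizedBy (A B C : ℝ) (M : Matrix.SpecialLinearGroup (Fin 2) ℤ) (A' C' : ℝ) :
    Prop :=
  ∀ x y : ℤ, binQF A B C (M.1 0 0 * x + M.1 0 1 * y) (M.1 1 0 * x + M.1 1 1 * y) =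
    A' * (x : ℝ) ^ 2 + C' * (y : ℝ) ^ 2

def binQFPolar (A B C : ℝ) (u v : ℤ × ℤ) : ℝ :=
  2 * A * u.1 * v.1 + B * (u.1 * v.2 + u.2 * v.1) + 2 * C * u.2 * v.2

def cross (u v : ℤ × ℤ) : ℤ := u.1 * v.2 - u.2 * v.1

theorem exists_sq_add_two_mul_sub_le {D : ℤ} (hD : D ≠ 0) (s : ℤ) :
    ∃ j : ℤ, (D + 2 * (s - j * D)) ^ 2 ≤ D ^ 2 ∧
      ((D + 2 * (s - j * D)) ^ 2 < D ^ 2 ∨ D ∣ s) := by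
  have hs := Int.mul_ediv_add_emod s D
  have hr := Int.emod_nonneg s hD
  rcases hD.lt_or_gt with hneg | hpos
  · have hr' : s % D < -D := by simpa [abs_of_neg hneg] using Int.emod_lt s hD
    refine ⟨s / D, ?_, ?_⟩
    · nlinarith
    · rcases hr.eq_or_lt with h | h
      · exact Or.inr (Int.dvd_of_emod_eq_zero h.symm)
      · left; nlinarith
  · have hr' := Int.emod_lt_of_pos s hpos
    refine ⟨s / D + 1, ?_, ?_⟩
    · nlinarith
    · rcases hr.eq_or_lt with h | h
      · exact Or.inr (Int.dvd_of_emod_eq_zero h.symm)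
      · left; nlinarith

theorem Matrix.SpecialLinearGroup.det_fin_two_eq_one {R : Type*} [CommRing R]
    (M : Matrix.SpecialLinearGroup (Fin 2) R) : M.1 0 0 * M.1 1 1 - M.1 0 1 * M.1 1 0 = 1 := by
  rw [← Matrix.det_fin_two]; exact M.2

theorem Matrix.SpecialLinearGroup.exists_odd_of_even_sub (M : Matrix.SpecialLinearGroup (Fin 2) ℤ)
    {x y : ℤ} (hx : Even (x - (M.1 0 0 + M.1 0 1))) (hy : Even (y - (M.1 1 0 + M.1 1 1))) :
    ∃ U V : ℤ, Odd U ∧ Odd V ∧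
      x = M.1 0 0 * U + M.1 0 1 * V ∧ y = M.1 1 0 * U + M.1 1 1 * V := by
  have hdet := M.det_fin_two_eq_one
  obtain ⟨α, hα⟩ := hx
  obtain ⟨β, hβ⟩ := hy
  refine ⟨M.1 1 1 * x - M.1 0 1 * y, M.1 0 0 * y - M.1 1 0 * x,
    ⟨M.1 1 1 * α - M.1 0 1 * β, ?_⟩, ⟨M.1 0 0 * β - M.1 1 0 * α, ?_⟩, ?_, ?_⟩
  · linear_combination hdet + M.1 1 1 * hα - M.1 0 1 * hβ
  · linear_combination hdet + M.1 0 0 * hβ - M.1 1 0 * hα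
  · linear_combination (-x) * hdet
  · linear_combination (-y) * hdet

section

variable {A B C : ℝ}

theorem binQF_pos (hA : 0 < A) (hdisc : B ^ 2 < 4 * A * C) {x y : ℤ} (hxy : (x, y) ≠ 0) :
    0 < binQF A B C x y := by
  have hsq : 4 * A * binQF A B C x y =
      (2 * A * x + B * y) ^ 2 + (4 * A * C - B ^ 2) * (y : ℝ) ^ 2 := by
    unfold binQF; ring
  refine pos_of_mul_pos_right (hsq ▸ ?_) (by positivity : (0 : ℝ) ≤ 4 * A)
  rcases eq_or_ne y 0 with rfl | hy
  · have hx : x ≠ 0 := by simpa using hxy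
    simp only [Int.cast_zero, mul_zero, add_zero, ne_eq, OfNat.ofNat_ne_zero, not_false_eq_true,
      zero_pow]
    positivity
  · have : 0 < 4 * A * C - B ^ 2 := by linarith
    positivity

theorem binQF_mul (k x y : ℤ) : binQF A B C (k * x) (k * y) = k ^ 2 * binQF A B C x y := by
  simp only [binQF]; push_cast; ring

theorem binQF_linear_combination (a b : ℤ) (u v : ℤ × ℤ) :
    binQF A B C (a * u.1 + b * v.1) (a * u.2 + b * v.2) =
      a ^ 2 * binQF A B C u.1 u.2 + b ^ 2 * binQF A B C v.1 v.2 +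
        a * b * binQFPolar A B C u v := by
  simp only [binQF, binQFPolar]; push_cast; ring

theorem binQF_add_of_binQFPolar_eq_zero {u v : ℤ × ℤ} (horth : binQFPolar A B C u v = 0) :
    binQF A B C (u + v).1 (u + v).2 = binQF A B C u.1 u.2 + binQF A B C v.1 v.2 := by
  simpa [horth] using binQF_linear_combination (A := A) (B := B) (C := C) 1 1 u v

theorem exists_binQFPolar_eq_zero_of_binQF_eq {p q : ℤ × ℤ} (h₁ : Even (p.1 - q.1))
    (h₂ : Even (p.2 - q.2)) (heq : binQF A B C q.1 q.2 = binQF A B C p.1 p.2) (hqp : q ≠ p)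
    (hqp' : q ≠ -p) :
    ∃ u v : ℤ × ℤ, u ≠ 0 ∧ v ≠ 0 ∧ binQFPolar A B C u v = 0 ∧ p = u + v := by
  obtain ⟨a, ha⟩ := h₁
  obtain ⟨b, hb⟩ := h₂
  refine ⟨(p.1 - a, p.2 - b), (a, b), ?_, ?_, ?_, by ext <;> simp⟩
  · intro h
    simp only [Prod.mk_eq_zero, sub_eq_zero] at h
    exact hqp' (Prod.ext (by simp; omega) (by simp; omega))
  · intro h
    simp only [Prod.mk_eq_zero] at h
    exact hqp (Prod.ext (by omega) (by omega))
  · have hq₁ : (q.1 : ℝ) = p.1 - 2 * a := by exact_mod_cast (by omega : q.1 = p.1 - 2 * a)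
    have hq₂ : (q.2 : ℝ) = p.2 - 2 * b := by exact_mod_cast (by omega : q.2 = p.2 - 2 * b)
    simp only [binQF, binQFPolar, hq₁, hq₂] at heq ⊢
    push_cast
    linear_combination (-1 / 2 : ℝ) * heq

theorem cross_ne_zero_of_binQFPolar_eq_zero (hA : 0 < A) (hdisc : B ^ 2 < 4 * A * C)
    {u v : ℤ × ℤ} (hu : u ≠ 0) (hv : v ≠ 0) (horth : binQFPolar A B C u v = 0) :
    cross u v ≠ 0 := by
  intro hcross
  have hcross' : (u.1 : ℝ) * v.2 = u.2 * v.1 := by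
    exact_mod_cast sub_eq_zero.mp hcross
  have hFv := binQF_pos hA hdisc hv
  -- `u` and `v` are proportional, so `v.i * polar(u, v) = 2 u.i F(v)`
  have h₁ : (v.1 : ℝ) * binQFPolar A B C u v = 2 * u.1 * binQF A B C v.1 v.2 := by
    simp only [binQF, binQFPolar]
    linear_combination (-(B * v.1 + 2 * C * v.2)) * hcross'
  have h₂ : (v.2 : ℝ) * binQFPolar A B C u v = 2 * u.2 * binQF A B C v.1 v.2 := by
    simp only [binQF, binQFPolar]
    linear_combination (2 * A * v.1 + B * v.2) * hcross'
  rw [horth, mul_zero, eq_comm] at h₁ h₂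
  apply hu
  ext
  · exact_mod_cast (by simpa [hFv.ne'] using h₁ : (u.1 : ℝ) = 0)
  · exact_mod_cast (by simpa [hFv.ne'] using h₂ : (u.2 : ℝ) = 0)

theorem exists_binQF_lt_of_not_dvd_cross (hA : 0 < A) (hdisc : B ^ 2 < 4 * A * C)
    {u v w : ℤ × ℤ} (hu : u ≠ 0) (hv : v ≠ 0) (horth : binQFPolar A B C u v = 0)
    (hcross : cross u v ≠ 0) (hw : ¬(cross u v ∣ cross w v ∧ cross u v ∣ cross u w)) :
    ∃ z : ℤ × ℤ, Even (z.1 - (u + v).1) ∧ Even (z.2 - (u + v).2) ∧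
      binQF A B C z.1 z.2 < binQF A B C u.1 u.2 + binQF A B C v.1 v.2 := by
  set D := cross u v with hD
  obtain ⟨j, hj, hj'⟩ := exists_sq_add_two_mul_sub_le hcross (cross w v)
  obtain ⟨k, hk, hk'⟩ := exists_sq_add_two_mul_sub_le hcross (cross u w)
  set N₁ := D + 2 * (cross w v - j * D)
  set N₂ := D + 2 * (cross u w - k * D)
  set z : ℤ × ℤ := (u.1 + v.1 + 2 * (w.1 - j * u.1 - k * v.1),
    u.2 + v.2 + 2 * (w.2 - j * u.2 - k * v.2))
  refine ⟨z, ⟨w.1 - j * u.1 - k * v.1, by simp only [z, Prod.fst_add]; ring⟩,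
    ⟨w.2 - j * u.2 - k * v.2, by simp only [z, Prod.snd_add]; ring⟩, ?_⟩
  -- Cramer's rule `D w = cross w v • u + cross u w • v` gives `D z = N₁ u + N₂ v`
  have hz : D * z.1 = N₁ * u.1 + N₂ * v.1 ∧ D * z.2 = N₁ * u.2 + N₂ * v.2 := by
    constructor <;> simp only [z, N₁, N₂, hD, cross] <;> ring
  have hFz : (D : ℝ) ^ 2 * binQF A B C z.1 z.2 =
      N₁ ^ 2 * binQF A B C u.1 u.2 + N₂ ^ 2 * binQF A B C v.1 v.2 := by
    rw [← binQF_mul, hz.1, hz.2, binQF_linear_combination, horth]; ring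
  have hFu := binQF_pos hA hdisc hu
  have hFv := binQF_pos hA hdisc hv
  have hD2 : (0 : ℝ) < (D : ℝ) ^ 2 := by positivity
  have hN₁ : (N₁ : ℝ) ^ 2 ≤ (D : ℝ) ^ 2 := by exact_mod_cast hj
  have hN₂ : (N₂ : ℝ) ^ 2 ≤ (D : ℝ) ^ 2 := by exact_mod_cast hk
  have hlt : (N₁ : ℝ) ^ 2 * binQF A B C u.1 u.2 + N₂ ^ 2 * binQF A B C v.1 v.2 <
      D ^ 2 * binQF A B C u.1 u.2 + D ^ 2 * binQF A B C v.1 v.2 := by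
    rcases hj' with h | h
    · exact add_lt_add_of_lt_of_le (mul_lt_mul_of_pos_right (by exact_mod_cast h) hFu)
        (mul_le_mul_of_nonneg_right hN₂ hFv.le)
    rcases hk' with h' | h'
    · exact add_lt_add_of_le_of_lt (mul_le_mul_of_nonneg_right hN₁ hFu.le)
        (mul_lt_mul_of_pos_right (by exact_mod_cast h') hFv)
    · exact absurd ⟨h, h'⟩ hw
  rw [← hFz, ← mul_add] at hlt
  exact lt_of_mul_lt_mul_left hlt hD2.le

theorem isUnit_cross_of_forall_dvd {u v : ℤ × ℤ} (hcross : cross u v ≠ 0)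
    (h : ∀ w, cross u v ∣ cross w v ∧ cross u v ∣ cross u w) : IsUnit (cross u v) := by
  obtain ⟨hv₂, hu₂⟩ := h (1, 0)
  obtain ⟨hv₁, hu₁⟩ := h (0, 1)
  simp only [cross, one_mul, zero_mul, sub_zero, zero_sub, mul_zero, mul_one, dvd_neg]
    at hv₂ hu₂ hv₁ hu₁
  have hsq : cross u v * cross u v ∣ cross u v * 1 := by
    rw [mul_one]
    exact dvd_sub (mul_dvd_mul hu₁ hv₂) (mul_dvd_mul hu₂ hv₁)
  exact isUnit_of_dvd_one ((mul_dvd_mul_iff_left hcross).mp hsq)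

theorem exists_isDiagonalizedBy_of_binQFPolar_eq_zero {u v : ℤ × ℤ}
    (horth : binQFPolar A B C u v = 0) (hunit : IsUnit (cross u v)) :
    ∃ M A' C', IsDiagonalizedBy A B C M A' C' := by
  set D := cross u v with hD
  -- scaling `v` by `D = ±1` turns the determinant `D` into `D * D = 1`
  have hdet : !![u.1, D * v.1; u.2, D * v.2].det = 1 := by
    rw [Matrix.det_fin_two_of, ← Int.isUnit_mul_self hunit, hD, cross]; ring
  refine ⟨⟨_, hdet⟩, binQF A B C u.1 u.2, binQF A B C (D * v.1) (D * v.2), fun x y => ?_⟩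
  simp only [Matrix.of_apply, Matrix.cons_val', Matrix.cons_val_zero, Matrix.cons_val_one,
    Matrix.empty_val', Matrix.cons_val_fin_one]
  simp only [binQF, binQFPolar] at horth ⊢
  push_cast
  linear_combination (x * y * D : ℝ) * horth

theorem IsMultiminimizing.exists_isDiagonalizedBy (hA : 0 < A) (hdisc : B ^ 2 < 4 * A * C)
    (h : IsMultiminimizing A B C) : ∃ M A' C', IsDiagonalizedBy A B C M A' C' := by
  obtain ⟨e, -, p, q, hpe₁, hpe₂, hqe₁, hqe₂, hmin, heq, hqp, hqp'⟩ := h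
  obtain ⟨u, v, hu, hv, horth, rfl⟩ := exists_binQFPolar_eq_zero_of_binQF_eq
    (by simpa using hpe₁.sub hqe₁) (by simpa using hpe₂.sub hqe₂) heq hqp hqp'
  have hcross := cross_ne_zero_of_binQFPolar_eq_zero hA hdisc hu hv horth
  refine exists_isDiagonalizedBy_of_binQFPolar_eq_zero horth
    (isUnit_cross_of_forall_dvd hcross fun w => ?_)
  by_contra hw
  obtain ⟨z, hz₁, hz₂, hlt⟩ :=
    exists_binQF_lt_of_not_dvd_cross hA hdisc hu hv horth hcross hw
  have hle := hmin z.1 z.2 (by simpa using hz₁.add hpe₁) (by simpa using hz₂.add hpe₂)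
  rw [binQF_add_of_binQFPolar_eq_zero horth] at hle
  exact hle.not_gt hlt

namespace IsDiagonalizedBy

variable {M : Matrix.SpecialLinearGroup (Fin 2) ℤ} {A' C' : ℝ}

theorem pos (hA : 0 < A) (hdisc : B ^ 2 < 4 * A * C) (hM : IsDiagonalizedBy A B C M A' C') :
    0 < A' ∧ 0 < C' := by
  have hdet := M.det_fin_two_eq_one
  have h₁ := hM 1 0
  have h₂ := hM 0 1
  simp only [mul_one, mul_zero, add_zero, zero_add, Int.cast_one, Int.cast_zero, one_pow, ne_eq,
    OfNat.ofNat_ne_zero, not_false_eq_true, zero_pow] at h₁ h₂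
  constructor
  · refine h₁ ▸ binQF_pos hA hdisc fun h0 => ?_
    simp only [Prod.mk_eq_zero] at h0
    simp [h0] at hdet
  · refine h₂ ▸ binQF_pos hA hdisc fun h0 => ?_
    simp only [Prod.mk_eq_zero] at h0
    simp [h0] at hdet

theorem add_le_binQF (hA' : 0 < A') (hC' : 0 < C') (hM : IsDiagonalizedBy A B C M A' C') {x y : ℤ}
    (hx : Even (x - (M.1 0 0 + M.1 0 1))) (hy : Even (y - (M.1 1 0 + M.1 1 1))) :
    A' + C' ≤ binQF A B C x y := by
  obtain ⟨U, V, hU, hV, rfl, rfl⟩ := M.exists_odd_of_even_sub hx hy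
  have one_le_sq {n : ℤ} (hn : Odd n) : (1 : ℝ) ≤ (n : ℝ) ^ 2 := by
    exact_mod_cast (one_le_sq_iff_one_le_abs n).mpr (Int.one_le_abs (by rintro rfl; simp at hn))
  rw [hM]
  linarith [mul_le_mul_of_nonneg_left (one_le_sq hU) hA'.le,
    mul_le_mul_of_nonneg_left (one_le_sq hV) hC'.le]

theorem isMultiminimizing (hA : 0 < A) (hdisc : B ^ 2 < 4 * A * C)
    (hM : IsDiagonalizedBy A B C M A' C') : IsMultiminimizing A B C := by
  have hdet := M.det_fin_two_eq_one
  obtain ⟨hA', hC'⟩ := hM.pos hA hdisc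
  have hp := hM 1 1
  have hq := hM 1 (-1)
  simp only [mul_one, mul_neg, Int.cast_one, Int.cast_neg, one_pow, neg_one_sq] at hp hq
  refine ⟨(M.1 0 0 + M.1 0 1, M.1 1 0 + M.1 1 1), ?_, (M.1 0 0 + M.1 0 1, M.1 1 0 + M.1 1 1),
    (M.1 0 0 - M.1 0 1, M.1 1 0 - M.1 1 1), by simp, by simp, ⟨-M.1 0 1, by ring⟩,
    ⟨-M.1 1 1, by ring⟩, fun x y hx hy => hp ▸ hM.add_le_binQF hA' hC' hx hy,
    by simpa [← sub_eq_add_neg, hp] using hq, ?_, ?_⟩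
  · rintro ⟨⟨r, hr⟩, ⟨s, hs⟩⟩
    have : (1 : ℤ) = 2 * (M.1 0 0 * s - r * M.1 1 0) := by
      linear_combination -hdet + M.1 0 0 * hs - M.1 1 0 * hr
    omega
  · intro h
    simp only [Prod.mk.injEq] at h
    have hb : M.1 0 1 = 0 := by omega
    have hd : M.1 1 1 = 0 := by omega
    simp [hb, hd] at hdet
  · intro h
    simp only [Prod.mk.injEq] at h
    have ha : M.1 0 0 = 0 := by omega
    have hc : M.1 1 0 = 0 := by omega
    simp [ha, hc] at hdet

end IsDiagonalizedBy

end

theorem stmt_6 (A B C : ℝ) (hA : 0 < A) (hposdef : B ^ 2 < 4 * A * C) :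
    (∃ e : ℤ × ℤ, ¬(Even e.1 ∧ Even e.2) ∧
      ∃ p q : ℤ × ℤ,
        Even (p.1 - e.1) ∧ Even (p.2 - e.2) ∧ Even (q.1 - e.1) ∧ Even (q.2 - e.2) ∧
        (∀ x y : ℤ, Even (x - e.1) → Even (y - e.2) →
          binQF A B C p.1 p.2 ≤ binQF A B C x y) ∧
        binQF A B C q.1 q.2 = binQF A B C p.1 p.2 ∧
        q ≠ p ∧ q ≠ (-p.1, -p.2)) ↔
    (∃ (M : Matrix.SpecialLinearGroup (Fin 2) ℤ) (A' C' : ℝ), ∀ x y : ℤ,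
      binQF A B C (M.1 0 0 * x + M.1 0 1 * y) (M.1 1 0 * x + M.1 1 1 * y) =
        A' * (x : ℝ) ^ 2 + C' * (y : ℝ) ^ 2) :=
  ⟨IsMultiminimizing.exists_isDiagonalizedBy hA hposdef,
    fun ⟨_, _, _, hM⟩ => IsDiagonalizedBy.isMultiminimizing hA hposdef hM⟩
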